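/- Let A be a right regular band and c ∈ A a central element. Suppose I1, I2 are subsemigroups of A with A = I1 ×_c I2, and let π1 : A → I1 and π2 : A → I2 be the (well-defined) projections determined by x = ⟨⟨π1(x), π2(x)⟩⟩_c for all x ∈ A. Then the relations ker π2 := {(x,y) : π2(x) = π2(y)} and ker π1 := {(x,y) : π1(x) = π1(y)} are complementary factor congruences of A, and moreover I_{ker π2} := {a : π2(a) = π2(c)} = I1 and I_{ker π1} := {a : π1(a) = π1(c)} = I2. Conversely, if θ and δ are complementary factor congruences of A and π1, π2 are the projections associated with the decomposition A = I_θ ×_c I_δ (where I_θ = {a : a θ c}, I_δ = {a : a δ c}), then ker π2 = θ and ker π1 = δ. -/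

import Mathlib

namespace RRBFactor

variable {A : Type*} [Semigroup A]

/-- The underlying order of a right regular band: `x ≤ y ↔ x·y = x`. -/
def rle (x y : A) : Prop := x * y = x

/-- `s` is the least upper bound of `{a, b}` with respect to the underlying
order of a right regular band. -/
def IsLub2 (a b s : A) : Prop :=
  rle a s ∧ rle b s ∧ ∀ t : A, rle a t → rle b t → rle s t

/-- `IsPair c x1 x2 x` expresses `x = ⟨⟨x1,x2⟩⟩_c`: the conjunction of
(comm), (dist), (p1), (p2) and (prod). -/
def IsPair (c x1 x2 x : A) : Prop :=
  (x * x1 = x1 * x ∧ x * x2 = x2 * x) ∧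
  IsLub2 (x * x1) (x * x2) x ∧
  IsLub2 (x * x1) (c * x1) x1 ∧
  IsLub2 (x * x2) (c * x2) x2 ∧
  x1 * x2 = x * c

/-- A subset is a subsemigroup when it is closed under multiplication. -/
def MulClosed (I : Set A) : Prop := ∀ a ∈ I, ∀ b ∈ I, a * b ∈ I

/-- `CDirect c I1 I2` expresses `A = I1 ×_c I2`: the conjunction of (Perm),
(Mod1), (Mod2), (Abs) (in both symmetric forms), (Exi) and (Onto). -/
def CDirect (c : A) (I1 I2 : Set A) : Prop :=
  -- (Perm)
  (∀ x1 ∈ I1, ∀ x2 ∈ I2, x1 * x2 = x2 * x1) ∧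
  -- (Mod1)
  (∀ x y : A, ∀ x1 ∈ I1, ∀ x2 ∈ I2, rle (x * c) (x1 * x2) →
    ∀ s : A, IsLub2 (x * x1) (x * x2) s →
      IsLub2 (x * x1 * y) (x * x2 * y) (s * y) ∧
      IsLub2 (y * x * x1) (y * x * x2) (y * s)) ∧
  -- (Mod2)
  (∀ x y : A, ∀ x1 ∈ I1, ∀ x2 ∈ I2, rle (x1 * x2) x →
    (∀ s : A, IsLub2 (x * x1) (c * x1) s →
      IsLub2 (x * x1 * y) (c * x1 * y) (s * y) ∧
      IsLub2 (y * x * x1) (y * c * x1) (y * s)) ∧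
    (∀ s : A, IsLub2 (x * x2) (c * x2) s →
      IsLub2 (x * x2 * y) (c * x2 * y) (s * y) ∧
      IsLub2 (y * x * x2) (y * c * x2) (y * s))) ∧
  -- (Abs)
  (∀ x1 ∈ I1, ∀ y1 ∈ I1, ∀ z2 ∈ I2, ∀ s : A,
      (IsLub2 x1 (y1 * z2) s ↔ IsLub2 x1 (y1 * c) s)) ∧
  (∀ x2 ∈ I2, ∀ y2 ∈ I2, ∀ z1 ∈ I1, ∀ s : A,
      (IsLub2 x2 (y2 * z1) s ↔ IsLub2 x2 (y2 * c) s)) ∧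
  -- (Exi)
  (∀ x1 ∈ I1, ∀ x2 ∈ I2, ∃ x : A, IsPair c x1 x2 x) ∧
  -- (Onto)
  (∀ x : A, ∃ x1 ∈ I1, ∃ x2 ∈ I2, IsPair c x1 x2 x)

end RRBFactor

open RRBFactor

namespace RRBFactor

variable {A : Type*} [Semigroup A]

/-- A semigroup congruence: an equivalence relation compatible with the
multiplication. -/
def IsCong (r : A → A → Prop) : Prop :=
  Equivalence r ∧ ∀ a b a' b' : A, r a b → r a' b' → r (a * a') (b * b')

/-- Complementary factor congruences: their intersection is the identity and
both relational compositions are all of `A × A`. -/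
def CompFactorCong (θ δ : A → A → Prop) : Prop :=
  IsCong θ ∧ IsCong δ ∧
  (∀ a b : A, θ a b → δ a b → a = b) ∧
  (∀ a b : A, (∃ u, θ a u ∧ δ u b) ∧ (∃ v, δ a v ∧ θ v b))

end RRBFactor

/-!
For `A = I1 ×_c I2`, the axioms (Mod1), (Mod2) and (Abs) force `x = ⟨⟨x1, x2⟩⟩_c` to determine
`x` from `(x1, x2)` and `(x1, x2)` from `x`, and give `x y = ⟨⟨x1 y1, x2 y2⟩⟩_c`. So the projections
are homomorphisms whose kernels are congruences; they meet in the identity by injectivity of the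
pairing and permute by (Exi). The definition of `I1 ×_c I2` is symmetric in the two factors, so
every statement about the second factor is the one about the first for `A = I2 ×_c I1`.

Conversely, for complementary factor congruences `θ`, `δ` the order, and hence the joins, of `A`
are computed coordinatewise in `A/θ × A/δ`. Modulo `θ`, (dist) and (p2) exhibit both `x` and
`π2 x` as the join of `x c` and `x π2 x` (using `π1 x θ c` and (prod)), so `x θ π2 x`, and
symmetrically `x δ π1 x`; both kernel equalities follow.
-/

namespace RRBFactor

class RightRegularBand (A : Type*) [Semigroup A] : Prop where
  mul_self : ∀ x : A, x * x = x
  right_regular : ∀ a b : A, a * b * a = b * a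

open RightRegularBand

section Semigroup

variable {A : Type*} [Semigroup A]

theorem rle_trans {a b d : A} (hab : rle a b) (hbd : rle b d) : rle a d := by
  unfold rle at *
  rw [← hab, mul_assoc, hbd]

theorem IsLub2.symm {a b s : A} (h : IsLub2 a b s) : IsLub2 b a s :=
  ⟨h.2.1, h.1, fun t hb ha => h.2.2 t ha hb⟩

theorem IsLub2.of_isLub2_isLub2 {a b s a₁ a₂ b₁ b₂ : A} (h : IsLub2 a b s)
    (ha : IsLub2 a₁ a₂ a) (hb : IsLub2 b₁ b₂ b) (h₂ : rle a₂ b₂) (h₁ : rle b₁ a₁) :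
    IsLub2 a₁ b₂ s :=
  ⟨rle_trans ha.1 h.1, rle_trans hb.2.1 h.2.1, fun t ht₁ ht₂ =>
    h.2.2 t (ha.2.2 t ht₁ (rle_trans h₂ ht₂)) (hb.2.2 t (rle_trans h₁ ht₁) ht₂)⟩

end Semigroup

section Band

variable {A : Type*} [Semigroup A] [RightRegularBand A]

theorem mul_self_mul (a b : A) : a * (a * b) = a * b := by
  rw [← mul_assoc, mul_self]

theorem mul_mul_self (a b : A) : a * b * b = a * b := by
  rw [mul_assoc, mul_self]

theorem right_regular' (a b : A) : a * (b * a) = b * a := by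
  rw [← mul_assoc, right_regular]

theorem rle_refl (a : A) : rle a a := mul_self a

theorem rle_of_eq {a b : A} (h : a = b) : rle a b := h ▸ rle_refl a

theorem rle_antisymm {a b : A} (hab : rle a b) (hba : rle b a) : a = b :=
  calc a = a * (b * a) := by rw [hba, hab]
    _ = b := by rw [right_regular', hba]

theorem mul_rle (a b : A) : rle (a * b) b := mul_mul_self a b

theorem IsLub2.unique {a b s s' : A} (h : IsLub2 a b s) (h' : IsLub2 a b s') : s = s' :=
  rle_antisymm (h.2.2 s' h'.1 h'.2.1) (h'.2.2 s h.1 h.2.1)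

theorem isLub2_of_rle {a b : A} (h : rle b a) : IsLub2 a b a :=
  ⟨rle_refl a, h, fun _ ha _ => ha⟩

theorem IsLub2.eq_of_rle {a b s : A} (h : IsLub2 a b s) (hba : rle b a) : s = a :=
  h.unique (isLub2_of_rle hba)

end Band

section Pair

variable {A : Type*} [Semigroup A] {c x x1 x2 : A}

theorem IsPair.swap (hp : IsPair c x1 x2 x) (hperm : x1 * x2 = x2 * x1) : IsPair c x2 x1 x :=
  ⟨hp.1.symm, hp.2.1.symm, hp.2.2.2.1, hp.2.2.1, hperm ▸ hp.2.2.2.2⟩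

variable [RightRegularBand A]

theorem IsPair.fst_eq_c {y1 y2 : A} (hp : IsPair c y1 y2 c) (hperm : y1 * y2 = y2 * y1) :
    y1 = c := by
  have hprod : y1 * y2 = c := by rw [hp.2.2.2.2, mul_self]
  calc y1 = c * y1 := hp.2.2.1.unique (isLub2_of_rle (rle_refl _))
    _ = c := by rw [← hprod, right_regular, ← hperm]

theorem IsPair.mul_fst_mul_self (hp : IsPair c x1 x2 x) : x * x1 * x = x * x1 := by
  rw [mul_assoc, ← hp.1.1, mul_self_mul]

theorem IsPair.mul_c_mul_snd (hp : IsPair c x1 x2 x) : x * c * x2 = x * c := by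
  rw [← hp.2.2.2.2, mul_mul_self]

variable (hc : ∀ x : A, c * x = x * c)
include hc

theorem mul_c_rle (a : A) : rle (a * c) a := by
  rw [rle, mul_assoc, hc, mul_self_mul]

theorem c_mul_rle_c_mul {a b : A} (h : rle (a * c) b) : rle (c * a) (c * b) := by
  rw [rle] at *
  rw [hc a, mul_assoc, ← mul_assoc c c, mul_self, ← mul_assoc, h]

theorem isPair_self (a : A) : IsPair c a c a := by
  refine ⟨⟨rfl, (hc a).symm⟩, ?_, ?_, ?_, rfl⟩
  · rw [mul_self]; exact isLub2_of_rle (mul_c_rle hc a)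
  · rw [mul_self]; exact isLub2_of_rle (mul_rle c a)
  · rw [mul_self]; exact (isLub2_of_rle (mul_rle a c)).symm

theorem IsPair.prod_rle (hp : IsPair c x1 x2 x) : rle (x1 * x2) x :=
  hp.2.2.2.2 ▸ mul_c_rle hc x

theorem IsPair.mul_snd_mul_c (hp : IsPair c x1 x2 x) : x * x2 * c = x * c := by
  rw [mul_assoc, ← hc, ← mul_assoc, hp.mul_c_mul_snd]

theorem IsPair.mul_mul_mul {y y1 y2 : A} (hp : IsPair c x1 x2 x) (hq : IsPair c y1 y2 y)
    (hperm : y1 * x2 = x2 * y1) : x1 * y1 * (x2 * y2) = x * y * c := by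
  rw [mul_assoc x1, ← mul_assoc y1, hperm, mul_assoc x2, ← mul_assoc, hp.2.2.2.2, hq.2.2.2.2,
    mul_assoc x c, ← mul_assoc c y, hc y, mul_mul_self, ← mul_assoc]

end Pair

namespace CDirect

section

variable {A : Type*} [Semigroup A] {c : A} {I1 I2 : Set A}

theorem symm (hD : CDirect c I1 I2) : CDirect c I2 I1 := by
  obtain ⟨perm, mod1, mod2, abs1, abs2, exi, onto⟩ := hD
  refine ⟨fun x2 h2 x1 h1 => (perm x1 h1 x2 h2).symm, fun x y x2 h2 x1 h1 hle s hs => ?_,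
    fun x y x2 h2 x1 h1 hle => ?_, abs2, abs1, fun x2 h2 x1 h1 => ?_, fun x => ?_⟩
  · rw [← perm x1 h1 x2 h2] at hle
    obtain ⟨hr, hl⟩ := mod1 x y x1 h1 x2 h2 hle s hs.symm
    exact ⟨hr.symm, hl.symm⟩
  · rw [← perm x1 h1 x2 h2] at hle
    exact (mod2 x y x1 h1 x2 h2 hle).symm
  · obtain ⟨x, hx⟩ := exi x1 h1 x2 h2
    exact ⟨x, hx.swap (perm x1 h1 x2 h2)⟩
  · obtain ⟨x1, h1, x2, h2, hx⟩ := onto x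
    exact ⟨x2, h2, x1, h1, hx.swap (perm x1 h1 x2 h2)⟩

variable (hD : CDirect c I1 I2) {x x1 x2 : A} (h1 : x1 ∈ I1) (h2 : x2 ∈ I2)
  (hp : IsPair c x1 x2 x)
include hD h1 h2 hp

theorem isPair_swap : IsPair c x2 x1 x := hp.swap (hD.1 x1 h1 x2 h2)

variable [RightRegularBand A]

theorem isLub2_mul_right (y : A) : IsLub2 (x * x1 * y) (x * x2 * y) (x * y) := by
  obtain ⟨-, mod1, -⟩ := hD
  exact (mod1 x y x1 h1 x2 h2 (rle_of_eq hp.2.2.2.2.symm) x hp.2.1).1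

theorem isLub2_mul_left (y : A) : IsLub2 (y * x * x1) (y * x * x2) (y * x) := by
  obtain ⟨-, mod1, -⟩ := hD
  exact (mod1 x y x1 h1 x2 h2 (rle_of_eq hp.2.2.2.2.symm) x hp.2.1).2

theorem mul_c_mul_fst : x * c * x1 = x * c :=
  (hD.isPair_swap h1 h2 hp).mul_c_mul_snd

theorem mul_mul_fst_eq_fst_mul (y : A) : y * x * x1 = x1 * (y * x) :=
  (hD.isLub2_mul_left h1 h2 hp y).1.symm.trans (right_regular _ _)

variable (hc : ∀ x : A, c * x = x * c)
include hc

theorem isLub2_fst_mul (y : A) : IsLub2 (x * x1 * y) (c * x1 * y) (x1 * y) := by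
  obtain ⟨-, -, mod2, -⟩ := hD
  exact ((mod2 x y x1 h1 x2 h2 (hp.prod_rle hc)).1 x1 hp.2.2.1).1

theorem isLub2_mul_fst (y : A) : IsLub2 (y * x * x1) (y * c * x1) (y * x1) := by
  obtain ⟨-, -, mod2, -⟩ := hD
  exact ((mod2 x y x1 h1 x2 h2 (hp.prod_rle hc)).1 x1 hp.2.2.1).2

theorem mul_fst_mul_c : x * x1 * c = x * c :=
  (hD.isPair_swap h1 h2 hp).mul_snd_mul_c hc

theorem mul_mul_fst_comm (y : A) : y * x * x1 = x * y * x1 :=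
  calc y * x * x1 = y * x * x1 * (y * x1) := (hD.isLub2_mul_fst h1 h2 hp hc y).1.symm
    _ = x * y * x1 := by rw [mul_assoc _ x1, right_regular', ← mul_assoc, right_regular]

end

section

variable {A : Type*} [Semigroup A] [RightRegularBand A] {c : A} {I1 I2 : Set A}
  (hD : CDirect c I1 I2)
include hD

theorem c_mem_left : c ∈ I1 := by
  obtain ⟨perm, -, -, -, -, -, onto⟩ := hD
  obtain ⟨x1, h1, x2, h2, hp⟩ := onto c
  exact hp.fst_eq_c (perm x1 h1 x2 h2) ▸ h1

variable (hc : ∀ x : A, c * x = x * c) {x x1 x2 : A} (h1 : x1 ∈ I1) (h2 : x2 ∈ I2)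
  (hp : IsPair c x1 x2 x)
include hc h1 h2 hp

theorem mul_fst_eq_of_isPair {x' : A} (hp' : IsPair c x1 x2 x') : x * x1 = x' * x1 := by
  have hl := hD.isLub2_mul_fst h1 h2 hp' hc x
  have hl' := hD.isLub2_mul_fst h1 h2 hp hc x'
  rw [hD.mul_mul_fst_comm h1 h2 hp' hc, hD.mul_c_mul_fst h1 h2 hp] at hl
  rw [hD.mul_c_mul_fst h1 h2 hp', ← hp'.2.2.2.2, hp.2.2.2.2] at hl'
  exact hl.unique hl'

theorem eq_of_isPair {x' : A} (hp' : IsPair c x1 x2 x') : x = x' := by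
  have hdist := hp.2.1
  rw [hD.mul_fst_eq_of_isPair hc h1 h2 hp hp',
    hD.symm.mul_fst_eq_of_isPair hc h2 h1 (hD.isPair_swap h1 h2 hp) (hD.isPair_swap h1 h2 hp')]
    at hdist
  exact hdist.unique hp'.2.1

theorem mul_fst_mul_of_mem (hI1 : MulClosed I1) {b : A} (hb : b ∈ I2) :
    x * x1 * b = x * c * b := by
  have hle : rle (x1 * b) (x1 * c) := by
    have hx1c : x1 * c ∈ I1 := hI1 x1 h1 c hD.c_mem_left
    obtain ⟨-, -, -, abs1, -⟩ := hD
    exact ((abs1 _ hx1c x1 h1 b hb _).2 (isLub2_of_rle (rle_refl _))).2.1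
  have hsplit : x * x1 * b = x * b * (x1 * b) := by rw [mul_assoc x b, right_regular', mul_assoc]
  calc x * x1 * b = x * x1 * b * c := by
        rw [hsplit, mul_assoc _ (x1 * b), ← hle, mul_assoc _ (x1 * c), mul_mul_self]
    _ = x * c * b := by rw [mul_assoc _ b, ← hc, ← mul_assoc, hD.mul_fst_mul_c h1 h2 hp hc]

variable {y1 y2 : A} (hy1 : y1 ∈ I1) (hy2 : y2 ∈ I2) (hq : IsPair c y1 y2 x)
include hy1 hy2 hq

omit hc in
theorem fst_mul_c_rle : rle (x1 * c) y1 := by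
  have hl : IsLub2 y1 (x1 * x2) y1 :=
    isLub2_of_rle (by rw [hp.2.2.2.2]; exact hD.mul_c_mul_fst hy1 hy2 hq)
  obtain ⟨-, -, -, abs1, -⟩ := hD
  exact ((abs1 y1 hy1 x1 h1 x2 h2 y1).1 hl).2.1

theorem mul_fst_mul_fst_eq (hI1 : MulClosed I1) : x * x1 * y1 = x * x1 := by
  have hl := hD.isLub2_mul_left hy1 hy2 hq (x * x1)
  rw [hp.mul_fst_mul_self, hD.mul_fst_mul_of_mem hc h1 h2 hp hI1 hy2, hq.mul_c_mul_snd] at hl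
  refine (hl.eq_of_rle ?_).symm
  rw [rle, ← mul_assoc, ← mul_assoc, mul_c_rle hc x, hD.mul_c_mul_fst h1 h2 hp,
    hD.mul_c_mul_fst hy1 hy2 hq]

theorem fst_eq_of_isPair (hI1 : MulClosed I1) : x1 = y1 := by
  have hc1 : c * x1 = c * y1 :=
    rle_antisymm (c_mul_rle_c_mul hc (hD.fst_mul_c_rle h1 h2 hp hy1 hy2 hq))
      (c_mul_rle_c_mul hc (hD.fst_mul_c_rle hy1 hy2 hq h1 h2 hp))
  have hx : x * x1 = x * y1 :=
    calc x * x1 = x * x1 * y1 := (hD.mul_fst_mul_fst_eq hc h1 h2 hp hy1 hy2 hq hI1).symm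
      _ = y1 * (x1 * x) := by rw [hp.1.1, hD.mul_mul_fst_eq_fst_mul hy1 hy2 hq]
      _ = x * y1 * x1 := by rw [← hp.1.1, ← mul_assoc, hD.mul_mul_fst_comm h1 h2 hp hc]
      _ = x * y1 := hD.mul_fst_mul_fst_eq hc hy1 hy2 hq h1 h2 hp hI1
  -- (p1) recovers a component from its `x`- and `c`-parts
  have hq1 := hq.2.2.1
  rw [← hx, ← hc1] at hq1
  exact hp.2.2.1.unique hq1

end

section

variable {A : Type*} [Semigroup A] [RightRegularBand A] {c : A} {I1 I2 : Set A}
  (hD : CDirect c I1 I2) (hc : ∀ x : A, c * x = x * c)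
  {x x1 x2 : A} (h1 : x1 ∈ I1) (h2 : x2 ∈ I2) (hp : IsPair c x1 x2 x)
  {y y1 y2 : A} (hy1 : y1 ∈ I1) (hy2 : y2 ∈ I2) (hq : IsPair c y1 y2 y)
include hD hc h1 h2 hp hy1 hy2 hq

theorem mul_mul_fst_mul : x * y * (x1 * y1) = x * x1 * y * y1 := by
  rw [← mul_assoc, ← hD.mul_mul_fst_comm h1 h2 hp hc, hD.mul_mul_fst_comm hy1 hy2 hq hc (x * x1),
    mul_assoc y x]

theorem fst_mul_mul_mul : x1 * y1 * (x * y) = x * x1 * y * y1 := by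
  rw [← mul_assoc, mul_assoc x1, ← hD.mul_mul_fst_eq_fst_mul h1 h2 hp,
    hD.mul_mul_fst_comm h1 h2 hp hc, mul_assoc x, mul_assoc, mul_assoc y1,
    ← hD.mul_mul_fst_eq_fst_mul hy1 hy2 hq, ← mul_assoc, ← mul_assoc]

theorem isLub2_mul_fst_mul : IsLub2 (x * y * (x1 * y1)) (c * (x1 * y1)) (x1 * y1) := by
  rw [hD.mul_mul_fst_mul hc h1 h2 hp hy1 hy2 hq]
  refine ⟨?_, mul_mul_self _ _, fun t ht hct => ?_⟩
  · rw [rle, mul_assoc _ y1, right_regular', ← mul_assoc, mul_assoc _ y, mul_assoc x,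
      right_regular', ← mul_assoc, mul_assoc, ← hD.mul_mul_fst_mul hc h1 h2 hp hy1 hy2 hq]
  · have hl := hD.isLub2_mul_fst hy1 hy2 hq hc (x * x1)
    rw [hD.mul_fst_mul_c h1 h2 hp hc] at hl
    have hle : rle (x * c * y1) (c * (x1 * y1)) := by
      rw [rle, hc (x1 * y1), ← mul_assoc, mul_assoc (x * c) y1, right_regular', ← mul_assoc,
        hD.mul_c_mul_fst h1 h2 hp, mul_assoc, ← hc y1, ← mul_assoc, mul_mul_self]
    refine (hD.isLub2_fst_mul h1 h2 hp hc y1).2.2 t (hl.2.2 t ht (rle_trans hle hct)) ?_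
    rwa [mul_assoc]

theorem mul_mul_fst_comm_mul : x * y * (x1 * y1) = x1 * y1 * (x * y) :=
  (hD.mul_mul_fst_mul hc h1 h2 hp hy1 hy2 hq).trans (hD.fst_mul_mul_mul hc h1 h2 hp hy1 hy2 hq).symm

theorem fst_mul_mul_snd_eq (hI1 : MulClosed I1) : x * x1 * y * y2 = x * x2 * y * y2 * c := by
  have hcomm := hD.symm.mul_mul_fst_comm hy2 hy1 (hD.isPair_swap hy1 hy2 hq) hc
  calc x * x1 * y * y2 = y * (x * x1 * y2) := by rw [hcomm, mul_assoc y]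
    _ = y * (x * x2 * y2 * c) := by
      rw [hD.mul_fst_mul_of_mem hc h1 h2 hp hI1 hy2, ← hp.mul_snd_mul_c hc, mul_assoc (x * x2) c,
        hc y2]
      simp only [mul_assoc]
    _ = y * (x * x2) * y2 * c := by simp only [mul_assoc]
    _ = x * x2 * y * y2 * c := by rw [← hcomm]

theorem isLub2_mul_mul (hI1 : MulClosed I1) (hI2 : MulClosed I2) :
    IsLub2 (x * y * (x1 * y1)) (x * y * (x2 * y2)) (x * y) := by
  have hp' := hD.isPair_swap h1 h2 hp
  have hq' := hD.isPair_swap hy1 hy2 hq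
  rw [hD.mul_mul_fst_mul hc h1 h2 hp hy1 hy2 hq, hD.symm.mul_mul_fst_mul hc h2 h1 hp' hy2 hy1 hq']
  refine (hD.isLub2_mul_right h1 h2 hp y).of_isLub2_isLub2 (hD.isLub2_mul_left hy1 hy2 hq _)
    (hD.isLub2_mul_left hy1 hy2 hq _) ?_ ?_
  · exact hD.fst_mul_mul_snd_eq hc h1 h2 hp hy1 hy2 hq hI1 ▸ mul_c_rle hc _
  · exact hD.symm.fst_mul_mul_snd_eq hc h2 h1 hp' hy2 hy1 hq' hI2 ▸ mul_c_rle hc _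

theorem isPair_mul (hI1 : MulClosed I1) (hI2 : MulClosed I2) :
    IsPair c (x1 * y1) (x2 * y2) (x * y) := by
  have hp' := hD.isPair_swap h1 h2 hp
  have hq' := hD.isPair_swap hy1 hy2 hq
  exact ⟨⟨hD.mul_mul_fst_comm_mul hc h1 h2 hp hy1 hy2 hq,
      hD.symm.mul_mul_fst_comm_mul hc h2 h1 hp' hy2 hy1 hq'⟩,
    hD.isLub2_mul_mul hc h1 h2 hp hy1 hy2 hq hI1 hI2,
    hD.isLub2_mul_fst_mul hc h1 h2 hp hy1 hy2 hq,
    hD.symm.isLub2_mul_fst_mul hc h2 h1 hp' hy2 hy1 hq',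
    hp.mul_mul_mul hc hq (hD.1 y1 hy1 x2 h2)⟩

end

section

theorem proj_swap {A : Type*} [Semigroup A] {c : A} {I1 I2 : Set A} (hD : CDirect c I1 I2)
    {π1 π2 : A → A} (H : ∀ x : A, π1 x ∈ I1 ∧ π2 x ∈ I2 ∧ IsPair c (π1 x) (π2 x) x) :
    ∀ x : A, π2 x ∈ I2 ∧ π1 x ∈ I1 ∧ IsPair c (π2 x) (π1 x) x :=
  fun x => ⟨(H x).2.1, (H x).1, hD.isPair_swap (H x).1 (H x).2.1 (H x).2.2⟩

variable {A : Type*} [Semigroup A] [RightRegularBand A] {c : A} {I1 I2 : Set A}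
  (hD : CDirect c I1 I2) (hc : ∀ x : A, c * x = x * c) {π1 π2 : A → A}
  (H : ∀ x : A, π1 x ∈ I1 ∧ π2 x ∈ I2 ∧ IsPair c (π1 x) (π2 x) x)
include hD hc H

theorem proj_injective {a b : A} (h1 : π1 a = π1 b) (h2 : π2 a = π2 b) : a = b := by
  have hb := (H b).2.2
  rw [← h1, ← h2] at hb
  exact hD.eq_of_isPair hc (H a).1 (H a).2.1 (H a).2.2 hb

variable (hI1 : MulClosed I1)
include hI1

theorem proj_fst_eq {x x1 x2 : A} (h1 : x1 ∈ I1) (h2 : x2 ∈ I2) (hp : IsPair c x1 x2 x) :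
    π1 x = x1 :=
  hD.fst_eq_of_isPair hc (H x).1 (H x).2.1 (H x).2.2 h1 h2 hp hI1

theorem setOf_proj_fst_eq : {a : A | π1 a = π1 c} = I2 := by
  have hcI1 := hD.c_mem_left
  have hcI2 := hD.symm.c_mem_left
  have hpair (b : A) : IsPair c c b b := (isPair_self hc b).swap (hc b).symm
  rw [hD.proj_fst_eq hc H hI1 hcI1 hcI2 (hpair c)]
  ext a
  refine ⟨fun (ha : π1 a = c) => ?_, fun ha => hD.proj_fst_eq hc H hI1 hcI1 ha (hpair a)⟩
  have hp := (H a).2.2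
  rw [ha] at hp
  exact hD.eq_of_isPair hc hcI1 (H a).2.1 hp (hpair _) ▸ (H a).2.1

variable (hI2 : MulClosed I2)
include hI2

theorem proj_fst_mul (u v : A) : π1 (u * v) = π1 u * π1 v :=
  hD.proj_fst_eq hc H hI1 (hI1 _ (H u).1 _ (H v).1) (hI2 _ (H u).2.1 _ (H v).2.1)
    (hD.isPair_mul hc (H u).1 (H u).2.1 (H u).2.2 (H v).1 (H v).2.1 (H v).2.2 hI1 hI2)

theorem exists_proj_eq (a b : A) : ∃ u, π1 u = π1 a ∧ π2 u = π2 b := by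
  obtain ⟨u, hu⟩ : ∃ u, IsPair c (π1 a) (π2 b) u := hD.2.2.2.2.2.1 _ (H a).1 _ (H b).2.1
  exact ⟨u, hD.proj_fst_eq hc H hI1 (H a).1 (H b).2.1 hu,
    hD.symm.proj_fst_eq hc (hD.proj_swap H) hI2 (H b).2.1 (H a).1
      (hD.isPair_swap (H a).1 (H b).2.1 hu)⟩

end

end CDirect

variable {A : Type*} [Semigroup A]

/-- The underlying order of the quotient `A/θ`, read on representatives. -/
def rleMod (θ : A → A → Prop) (a b : A) : Prop := θ (a * b) a

def IsLub2Mod (θ : A → A → Prop) (a b s : A) : Prop :=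
  rleMod θ a s ∧ rleMod θ b s ∧ ∀ t : A, rleMod θ a t → rleMod θ b t → rleMod θ s t

theorem isCong_ker {f : A → A} (hf : ∀ u v, f (u * v) = f u * f v) :
    IsCong (fun x y => f x = f y) :=
  ⟨⟨fun _ => rfl, Eq.symm, Eq.trans⟩, fun a b a' b' h h' => by simp only [hf, h, h']⟩

namespace IsCong

variable {θ : A → A → Prop} (hθ : IsCong θ)
include hθ

theorem mul_left (a : A) {b b' : A} (h : θ b b') : θ (a * b) (a * b') :=
  hθ.2 _ _ _ _ (hθ.1.refl a) h

theorem mul_right {a a' : A} (h : θ a a') (b : A) : θ (a * b) (a' * b) :=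
  hθ.2 _ _ _ _ h (hθ.1.refl b)

theorem rleMod_of_rle {a b : A} (h : rle a b) : rleMod θ a b := by
  rw [rleMod, h]; exact hθ.1.refl a

theorem rleMod_of_rel_right {a t t' : A} (h : rleMod θ a t) (ht : θ t t') : rleMod θ a t' :=
  hθ.1.trans (hθ.mul_left a (hθ.1.symm ht)) h

theorem rleMod_of_rel_left {a a' t : A} (ha : θ a a') (h : rleMod θ a t) : rleMod θ a' t :=
  hθ.1.trans (hθ.mul_right (hθ.1.symm ha) t) (hθ.1.trans h ha)

theorem isLub2Mod_of_rel {a a' b b' s : A} (h : IsLub2Mod θ a b s) (ha : θ a a') (hb : θ b b') :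
    IsLub2Mod θ a' b' s :=
  ⟨hθ.rleMod_of_rel_left ha h.1, hθ.rleMod_of_rel_left hb h.2.1, fun t ha' hb' =>
    h.2.2 t (hθ.rleMod_of_rel_left (hθ.1.symm ha) ha') (hθ.rleMod_of_rel_left (hθ.1.symm hb) hb')⟩

variable [RightRegularBand A]

theorem rel_of_rleMod {a b : A} (hab : rleMod θ a b) (hba : rleMod θ b a) : θ a b := by
  have h : θ a (a * (b * a)) := hθ.1.trans (hθ.1.symm hab) (hθ.mul_left a (hθ.1.symm hba))
  rw [right_regular'] at h
  exact hθ.1.trans h hba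

theorem rel_of_isLub2Mod {a b s s' : A} (h : IsLub2Mod θ a b s) (h' : IsLub2Mod θ a b s') :
    θ s s' :=
  hθ.rel_of_rleMod (h.2.2 s' h'.1 h'.2.1) (h'.2.2 s h.1 h.2.1)

end IsCong

namespace CompFactorCong

variable {θ δ : A → A → Prop} (h : CompFactorCong θ δ)
include h

theorem symm : CompFactorCong δ θ :=
  ⟨h.2.1, h.1, fun a b hd ht => h.2.2.1 a b ht hd, fun a b => (h.2.2.2 a b).symm⟩

theorem rle_of_rleMod {a b : A} (hθ : rleMod θ a b) (hδ : rleMod δ a b) : rle a b :=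
  h.2.2.1 _ _ hθ hδ

/-- Joins in `A` are computed coordinatewise in `A/θ × A/δ`; here the `θ`-coordinate. -/
theorem isLub2Mod_of_isLub2 [RightRegularBand A] {a b s : A} (hs : IsLub2 a b s) :
    IsLub2Mod θ a b s := by
  refine ⟨h.1.rleMod_of_rle hs.1, h.1.rleMod_of_rle hs.2.1, fun t ha hb => ?_⟩
  obtain ⟨u, htu, hus⟩ := (h.2.2.2 t s).1
  have hle {d : A} (hd : rleMod θ d t) (hds : rle d s) : rle d u :=
    h.rle_of_rleMod (h.1.rleMod_of_rel_right hd htu)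
      (h.2.1.rleMod_of_rel_right (h.2.1.rleMod_of_rle hds) (h.2.1.1.symm hus))
  exact h.1.rleMod_of_rel_right (h.1.rleMod_of_rle (hs.2.2 u (hle ha hs.1) (hle hb hs.2.1)))
    (h.1.1.symm htu)

theorem mul_comm_of_rel {c p q : A} (hc : ∀ x : A, c * x = x * c) (hp : θ p c) (hq : δ q c) :
    p * q = q * p := by
  refine h.2.2.1 _ _ (h.1.1.trans (h.1.mul_right hp q) ?_) (h.2.1.1.trans (h.2.1.mul_left p hq) ?_)
  · rw [hc]; exact h.1.mul_left q (h.1.1.symm hp)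
  · rw [← hc]; exact h.2.1.mul_right (h.2.1.1.symm hq) p

variable [RightRegularBand A] {c x p q : A}

theorem rel_snd (hx : IsPair c p q x) (hp : θ p c) : θ x q := by
  have hcq : θ (c * q) (x * c) := hx.2.2.2.2 ▸ h.1.mul_right (h.1.1.symm hp) q
  exact h.1.rel_of_isLub2Mod
    (h.1.isLub2Mod_of_rel (h.isLub2Mod_of_isLub2 hx.2.1) (h.1.mul_left x hp) (h.1.1.refl _))
    (h.1.isLub2Mod_of_rel (h.isLub2Mod_of_isLub2 hx.2.2.2.1.symm) hcq (h.1.1.refl _))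

theorem snd_eq_iff {y p' q' : A} (hx : IsPair c p q x) (hy : IsPair c p' q' y) (hp : θ p c)
    (hp' : θ p' c) (hq : δ q c) (hq' : δ q' c) : q = q' ↔ θ x y := by
  have hxq := h.rel_snd hx hp
  have hyq := h.rel_snd hy hp'
  refine ⟨fun e => h.1.1.trans hxq (e ▸ h.1.1.symm hyq), fun hxy => h.2.2.1 _ _ ?_ ?_⟩
  · exact h.1.1.trans (h.1.1.symm hxq) (h.1.1.trans hxy hyq)
  · exact h.2.1.1.trans hq (h.2.1.1.symm hq')

end CompFactorCong

end RRBFactor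

/-- The bijective correspondence between `c`-direct product decompositions and
pairs of complementary factor congruences of a right regular band `A` with a
central element `c`.

Forward direction: if `A = I1 ×_c I2` and `π1`, `π2` are the projections
determined by `x = ⟨⟨π1 x, π2 x⟩⟩_c`, then `ker π2` and `ker π1` are
complementary factor congruences and `I_{ker π2} = I1`, `I_{ker π1} = I2`.

Converse: if `θ`, `δ` are complementary factor congruences and `π1`, `π2` are
the projections associated with the decomposition `A = I_θ ×_c I_δ`, then
`ker π2 = θ` and `ker π1 = δ`. -/
theorem rrb_factor_congruence_correspondence {A : Type*} [Semigroup A]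
    (idem : ∀ x : A, x * x = x) (rrb : ∀ a b : A, a * b * a = b * a)
    (c : A) (hc : ∀ x : A, c * x = x * c) :
    (∀ (I1 I2 : Set A), MulClosed I1 → MulClosed I2 → CDirect c I1 I2 →
      ∀ π1 π2 : A → A,
        (∀ x : A, π1 x ∈ I1 ∧ π2 x ∈ I2 ∧ IsPair c (π1 x) (π2 x) x) →
        (CompFactorCong (fun x y : A => π2 x = π2 y) (fun x y : A => π1 x = π1 y) ∧
          {a : A | π2 a = π2 c} = I1 ∧ {a : A | π1 a = π1 c} = I2)) ∧
    (∀ θ δ : A → A → Prop, CompFactorCong θ δ →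
      ∀ π1 π2 : A → A,
        (∀ x : A, π1 x ∈ {a : A | θ a c} ∧ π2 x ∈ {a : A | δ a c} ∧
          IsPair c (π1 x) (π2 x) x) →
        ((∀ x y : A, π2 x = π2 y ↔ θ x y) ∧ (∀ x y : A, π1 x = π1 y ↔ δ x y))) := by
  have : RightRegularBand A := ⟨idem, rrb⟩
  refine ⟨fun I1 I2 hI1 hI2 hD π1 π2 H => ?_, fun θ δ h π1 π2 H => ?_⟩
  · have H' := hD.proj_swap H
    refine ⟨⟨isCong_ker (hD.symm.proj_fst_mul hc H' hI2 hI1),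
      isCong_ker (hD.proj_fst_mul hc H hI1 hI2),
      fun a b h2 h1 => hD.proj_injective hc H h1 h2, fun a b => ⟨?_, ?_⟩⟩,
      hD.symm.setOf_proj_fst_eq hc H' hI2, hD.setOf_proj_fst_eq hc H hI1⟩
    · obtain ⟨u, h1, h2⟩ := hD.exists_proj_eq hc H hI1 hI2 b a
      exact ⟨u, h2.symm, h1⟩
    · obtain ⟨v, h1, h2⟩ := hD.exists_proj_eq hc H hI1 hI2 a b
      exact ⟨v, h1.symm, h2⟩
  · have H' (x : A) : IsPair c (π2 x) (π1 x) x :=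
      (H x).2.2.swap (h.mul_comm_of_rel hc (H x).1 (H x).2.1)
    exact ⟨fun x y => h.snd_eq_iff (H x).2.2 (H y).2.2 (H x).1 (H y).1 (H x).2.1 (H y).2.1,
      fun x y => h.symm.snd_eq_iff (H' x) (H' y) (H x).2.1 (H y).2.1 (H x).1 (H y).1⟩
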